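/- Let σ and w be unit vectors in ℂ^N with ⟨w,σ⟩ = ⟨σ,w⟩ = x for some real 0 < x < 1. Define Grover's iterate G = −(I − 2|σ⟩⟨σ|)·(I − 2|w⟩⟨w|), the Hamiltonian H = 2ix·(|w⟩⟨σ| − |σ⟩⟨w|), and the time t₀ = (π − 2·arccos x)/(2x·√(1 − x²)). Let S be the two-dimensional subspace spanned by σ and w, and let P be the orthogonal projection onto the orthogonal complement of S. Then exp(−iHt₀) = G + 2P as operators on all of ℂ^N. -/

import Mathlib

open scoped InnerProductSpace

/-- The outer product |u⟩⟨v| : the rank-one operator sending φ to ⟨v,φ⟩·u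
(inner product conjugate-linear in the first argument). -/
noncomputable def outer {N : ℕ} (u v : EuclideanSpace ℂ (Fin N)) :
    EuclideanSpace ℂ (Fin N) →L[ℂ] EuclideanSpace ℂ (Fin N) :=
  ContinuousLinearMap.toSpanSingleton ℂ u ∘L (innerSL ℂ v)

/-!
Put `A := |w⟩⟨σ| - |σ⟩⟨w|` and `μ := √(1 - x²)`. Then `A³ = -μ² A`, so `D := A / μ` satisfies
`D³ = -D` and splits as `D = i (P₊ - P₋)` with the orthogonal idempotents `P± := -(D² ± i D) / 2`.
Exponentiating the two idempotents separately gives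
`exp (s A) = 1 + (sin (s μ) / μ) A + ((1 - cos (s μ)) / μ²) A²`.
Here `-i t₀ H = 2 x t₀ A` and `2 x t₀ μ = θ := π - 2 arccos x`, with `cos θ = 1 - 2x²` and
`sin θ = 2 x μ`, so `exp (-i t₀ H) = 1 + 2x A + (2x² / μ²) A²`. On the other side
`G = -1 + 2x A - 2 A²`, and `-A² / μ²` is the orthogonal projection onto `span {σ, w}`: its range
lies in that span and `A²` acts on the span as `-μ²`.
-/

open NormedSpace

section Exponential

variable {𝕂 𝔸 : Type*} [RCLike 𝕂] [NormedRing 𝔸] [NormedAlgebra 𝕂 𝔸] [CompleteSpace 𝔸]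

theorem exp_smul_of_isIdempotentElem {Q : 𝔸} (hQ : IsIdempotentElem Q) (c : 𝕂) :
    exp (c • Q) = 1 + (exp c - 1) • Q := by
  have hterm : (fun n : ℕ => (n.factorial⁻¹ : 𝕂) • (c • Q) ^ n) =
      fun n => ((n.factorial⁻¹ : 𝕂) • c ^ n) • Q + if n = 0 then 1 - Q else 0 := by
    funext n
    rcases n with _ | n
    · simp
    · simp [smul_pow, hQ.pow_succ_eq, smul_smul]
  have hsum := ((exp_series_hasSum_exp' (𝕂 := 𝕂) c).smul_const Q).add (hasSum_ite_eq 0 (1 - Q))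
  rw [← hterm] at hsum
  rw [(exp_series_hasSum_exp' (c • Q)).unique hsum, sub_smul, one_smul]
  abel

theorem exp_add_smul_of_mul_eq_zero {P Q : 𝔸} (hP : IsIdempotentElem P) (hQ : IsIdempotentElem Q)
    (hPQ : P * Q = 0) (hQP : Q * P = 0) (a b : 𝕂) :
    exp (a • P + b • Q) = 1 + (exp a - 1) • P + (exp b - 1) • Q := by
  have hcomm : Commute (a • P) (b • Q) := by
    simp only [Commute, SemiconjBy, smul_mul_smul_comm, hPQ, hQP, smul_zero]
  have hball : ∀ y : 𝔸, y ∈ Metric.eball (0 : 𝔸) (expSeries 𝕂 𝔸).radius := fun y => by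
    simp [expSeries_radius_eq_top]
  rw [exp_add_of_commute_of_mem_ball hcomm (hball _) (hball _), exp_smul_of_isIdempotentElem hP,
    exp_smul_of_isIdempotentElem hQ]
  simp only [add_mul, mul_add, one_mul, mul_one, smul_mul_smul_comm, hPQ, smul_zero, add_zero]

end Exponential

section SpectralIdempotents

variable {𝔸 : Type*} [Ring 𝔸] [Algebra ℂ 𝔸] {D : 𝔸}

theorem isIdempotentElem_of_mul_mul_self_eq_neg (hD : D * D * D = -D) {ε : ℂ} (hε : ε ^ 2 = -1) :
    IsIdempotentElem ((-(1 / 2) : ℂ) • (D * D + ε • D)) := by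
  have hD4 : D * D * (D * D) = -(D * D) := by rw [← mul_assoc, hD, neg_mul]
  have hD3 : D * (D * D) = -D := by rw [← mul_assoc, hD]
  simp only [IsIdempotentElem, add_mul, mul_add, smul_mul_assoc, mul_smul_comm, hD, hD3, hD4,
    smul_add, smul_neg, smul_smul]
  match_scalars
  · linear_combination (1 / 4 : ℂ) * hε
  · ring

theorem mul_eq_zero_of_mul_mul_self_eq_neg (hD : D * D * D = -D) {ε : ℂ} (hε : ε ^ 2 = -1) :
    (-(1 / 2) : ℂ) • (D * D + ε • D) * ((-(1 / 2) : ℂ) • (D * D + (-ε) • D)) = 0 := by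
  have hD4 : D * D * (D * D) = -(D * D) := by rw [← mul_assoc, hD, neg_mul]
  have hD3 : D * (D * D) = -D := by rw [← mul_assoc, hD]
  simp only [add_mul, mul_add, smul_mul_assoc, mul_smul_comm, hD, hD3, hD4,
    smul_add, smul_neg, smul_smul]
  rw [show (0 : 𝔸) = (0 : ℂ) • (D * D) + (0 : ℂ) • D by simp]
  match_scalars
  · linear_combination (-1 / 4 : ℂ) * hε
  · ring

end SpectralIdempotents

theorem exp_smul_of_mul_mul_self_eq_neg {𝔸 : Type*} [NormedRing 𝔸] [NormedAlgebra ℂ 𝔸]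
    [CompleteSpace 𝔸] {D : 𝔸} (hD : D * D * D = -D) (s : ℂ) :
    exp (s • D) = 1 + Complex.sin s • D + (1 - Complex.cos s) • (D * D) := by
  have hI : Complex.I ^ 2 = -1 := Complex.I_sq
  have hnI : (-Complex.I) ^ 2 = -1 := by rw [neg_sq, hI]
  have hsplit : s • D = (s * Complex.I) • ((-(1 / 2) : ℂ) • (D * D + Complex.I • D)) +
      (-s * Complex.I) • ((-(1 / 2) : ℂ) • (D * D + (-Complex.I) • D)) := by
    simp only [smul_add, smul_smul]
    match_scalars
    · linear_combination s * hI
    · ring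
  rw [hsplit, exp_add_smul_of_mul_eq_zero (isIdempotentElem_of_mul_mul_self_eq_neg hD hI)
    (isIdempotentElem_of_mul_mul_self_eq_neg hD hnI) (mul_eq_zero_of_mul_mul_self_eq_neg hD hI)
    (by simpa using mul_eq_zero_of_mul_mul_self_eq_neg hD hnI), ← Complex.exp_eq_exp_ℂ,
    Complex.exp_mul_I, Complex.exp_mul_I, Complex.cos_neg, Complex.sin_neg]
  simp only [smul_add, smul_smul]
  match_scalars
  · ring
  · ring
  · linear_combination (-Complex.sin s) * hI

theorem exp_smul_of_mul_mul_self_eq_neg_sq_smul {𝔸 : Type*} [NormedRing 𝔸] [NormedAlgebra ℂ 𝔸]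
    [CompleteSpace 𝔸] {A : 𝔸} {μ : ℂ} (hμ : μ ≠ 0) (hA : A * A * A = -(μ ^ 2) • A) (s : ℂ) :
    exp (s • A) =
      1 + (Complex.sin (s * μ) / μ) • A + ((1 - Complex.cos (s * μ)) / μ ^ 2) • (A * A) := by
  have hD : μ⁻¹ • A * (μ⁻¹ • A) * (μ⁻¹ • A) = -(μ⁻¹ • A) := by
    simp only [smul_mul_smul_comm, hA, smul_smul, ← smul_neg, neg_smul]
    congr 1
    field_simp
  have hs : s • A = (s * μ) • (μ⁻¹ • A) := by
    rw [smul_smul, mul_assoc, mul_inv_cancel₀ hμ, mul_one]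
  rw [hs, exp_smul_of_mul_mul_self_eq_neg hD, smul_mul_smul_comm, smul_smul, smul_smul]
  congr 2
  field_simp

lemma cos_pi_sub_two_mul_arccos {x : ℝ} (hx₁ : -1 ≤ x) (hx₂ : x ≤ 1) :
    Real.cos (Real.pi - 2 * Real.arccos x) = 1 - 2 * x ^ 2 := by
  rw [Real.cos_pi_sub, Real.cos_two_mul, Real.cos_arccos hx₁ hx₂]
  ring

lemma sin_pi_sub_two_mul_arccos {x : ℝ} (hx₁ : -1 ≤ x) (hx₂ : x ≤ 1) :
    Real.sin (Real.pi - 2 * Real.arccos x) = 2 * x * Real.sqrt (1 - x ^ 2) := by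
  rw [Real.sin_pi_sub, Real.sin_two_mul, Real.sin_arccos, Real.cos_arccos hx₁ hx₂]
  ring

section Grover

variable {N : ℕ}

lemma outer_apply (u v φ : EuclideanSpace ℂ (Fin N)) : outer u v φ = ⟪v, φ⟫_ℂ • u := rfl

lemma outer_mul_outer (u v a b : EuclideanSpace ℂ (Fin N)) :
    outer u v * outer a b = ⟪v, a⟫_ℂ • outer u b := by
  ext1 φ
  simp only [mul_apply_eq_comp, outer_apply, smul_apply, inner_smul_right, smul_smul, mul_comm]

noncomputable def skewOuter (σ w : EuclideanSpace ℂ (Fin N)) :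
    EuclideanSpace ℂ (Fin N) →L[ℂ] EuclideanSpace ℂ (Fin N) :=
  outer w σ - outer σ w

variable {σ w : EuclideanSpace ℂ (Fin N)} {x : ℝ}
  (hσ : ⟪σ, σ⟫_ℂ = 1) (hw : ⟪w, w⟫_ℂ = 1) (hwσ : ⟪w, σ⟫_ℂ = x) (hσw : ⟪σ, w⟫_ℂ = x)
include hσ hw hwσ hσw

lemma skewOuter_mul_self : skewOuter σ w * skewOuter σ w =
    (x : ℂ) • (outer w σ + outer σ w) - outer w w - outer σ σ := by
  simp only [skewOuter, sub_mul, mul_sub, outer_mul_outer, hσ, hw, hσw, hwσ, one_smul]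
  module

lemma skewOuter_mul_self_mul_self : skewOuter σ w * skewOuter σ w * skewOuter σ w =
    -(1 - (x : ℂ) ^ 2) • skewOuter σ w := by
  rw [skewOuter_mul_self hσ hw hwσ hσw, skewOuter]
  simp only [sub_mul, add_mul, mul_sub, smul_mul_assoc, smul_sub, smul_add,
    outer_mul_outer, hσ, hw, hσw, hwσ, one_smul]
  match_scalars <;> ring

lemma inner_skewOuter_mul_self_apply {u : EuclideanSpace ℂ (Fin N)}
    (hu : u ∈ Submodule.span ℂ {σ, w}) (φ : EuclideanSpace ℂ (Fin N)) :
    ⟪u, (skewOuter σ w * skewOuter σ w) φ⟫_ℂ = -(1 - (x : ℂ) ^ 2) * ⟪u, φ⟫_ℂ := by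
  obtain ⟨a, b, rfl⟩ := Submodule.mem_span_pair.mp hu
  rw [skewOuter_mul_self hσ hw hwσ hσw]
  simp only [sub_apply, add_apply, smul_apply, outer_apply, inner_add_left, inner_smul_left,
    inner_sub_right, inner_add_right, inner_smul_right, hσ, hw, hσw, hwσ]
  ring

lemma skewOuter_mul_self_apply_mem_span (φ : EuclideanSpace ℂ (Fin N)) :
    (skewOuter σ w * skewOuter σ w) φ ∈ Submodule.span ℂ {σ, w} := by
  rw [skewOuter_mul_self hσ hw hwσ hσw, Submodule.mem_span_pair]
  refine ⟨x * ⟪w, φ⟫_ℂ - ⟪σ, φ⟫_ℂ, x * ⟪σ, φ⟫_ℂ - ⟪w, φ⟫_ℂ, ?_⟩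
  simp only [add_apply, smul_apply, sub_apply, outer_apply]
  module

lemma starProjection_orthogonal_span_pair (hx : x ^ 2 ≠ 1) :
    (Submodule.span ℂ {σ, w})ᗮ.starProjection =
      1 + (1 - (x : ℂ) ^ 2)⁻¹ • (skewOuter σ w * skewOuter σ w) := by
  have hμ : 1 - (x : ℂ) ^ 2 ≠ 0 := by
    rw [sub_ne_zero, ne_comm]; exact_mod_cast hx
  ext1 φ
  refine Submodule.eq_starProjection_of_mem_orthogonal ?_ (Submodule.le_orthogonal_orthogonal _ ?_)
  · rw [Submodule.mem_orthogonal]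
    intro u hu
    rw [add_apply, smul_apply, one_apply_eq_self, inner_add_right, inner_smul_right,
      inner_skewOuter_mul_self_apply hσ hw hwσ hσw hu]
    field_simp
    ring
  · rw [add_apply, smul_apply, one_apply_eq_self, sub_add_cancel_left, ← neg_smul]
    exact Submodule.smul_mem _ _ (skewOuter_mul_self_apply_mem_span hσ hw hwσ hσw φ)

lemma neg_reflection_mul_reflection_eq :
    -((1 - (2 : ℂ) • outer σ σ) * (1 - (2 : ℂ) • outer w w)) =
      -1 + (2 * x : ℂ) • skewOuter σ w - (2 : ℂ) • (skewOuter σ w * skewOuter σ w) := by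
  rw [skewOuter_mul_self hσ hw hwσ hσw, skewOuter]
  simp only [mul_sub, sub_mul, one_mul, mul_one, smul_mul_smul_comm, outer_mul_outer, hσw]
  module

end Grover

theorem stmt_11 {N : ℕ} (σ w : EuclideanSpace ℂ (Fin N))
    (hσ : ‖σ‖ = 1) (hw : ‖w‖ = 1) (x : ℝ) (hx0 : 0 < x) (hx1 : x < 1)
    (hwσ : ⟪w, σ⟫_ℂ = (x : ℂ)) (hσw : ⟪σ, w⟫_ℂ = (x : ℂ))
    (G H : EuclideanSpace ℂ (Fin N) →L[ℂ] EuclideanSpace ℂ (Fin N))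
    (hG : G = -((1 - (2 : ℂ) • outer σ σ) * (1 - (2 : ℂ) • outer w w)))
    (hH : H = (2 * Complex.I * (x : ℂ)) • (outer w σ - outer σ w))
    (t₀ : ℝ) (ht₀ : t₀ = (Real.pi - 2 * Real.arccos x) / (2 * x * Real.sqrt (1 - x ^ 2)))
    (S : Submodule ℂ (EuclideanSpace ℂ (Fin N))) (hS : S = Submodule.span ℂ {σ, w})
    (P : EuclideanSpace ℂ (Fin N) →L[ℂ] EuclideanSpace ℂ (Fin N))
    (hP : P = (Sᗮ).subtypeL ∘L Submodule.orthogonalProjectionOnto Sᗮ) :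
    NormedSpace.exp ((-(Complex.I * (t₀ : ℂ))) • H) = G + (2 : ℂ) • P := by
  subst hG hH hP hS ht₀
  have hσσ : ⟪σ, σ⟫_ℂ = 1 := by simp [inner_self_eq_norm_sq_to_K, hσ]
  have hww : ⟪w, w⟫_ℂ = 1 := by simp [inner_self_eq_norm_sq_to_K, hw]
  set μ := Real.sqrt (1 - x ^ 2) with hμ_def
  have hμ : 0 < μ := Real.sqrt_pos.mpr (by nlinarith)
  have hμ_sq : (μ : ℂ) ^ 2 = 1 - (x : ℂ) ^ 2 := by
    rw [← Complex.ofReal_pow, Real.sq_sqrt (by nlinarith)]; push_cast; ring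
  set θ := Real.pi - 2 * Real.arccos x
  set t := θ / (2 * x * μ)
  have hangle : 2 * x * t * μ = θ := by
    simp only [t]
    field_simp
  have hexponent : (-(Complex.I * (t : ℂ))) • (2 * Complex.I * (x : ℂ)) • skewOuter σ w =
      ((2 * x * t : ℝ) : ℂ) • skewOuter σ w := by
    rw [smul_smul]
    congr 1
    push_cast
    linear_combination (-2 * x * t : ℂ) * Complex.I_sq
  have hcube := skewOuter_mul_self_mul_self hσσ hww hwσ hσw
  rw [← hμ_sq] at hcube
  have hμ0 : (μ : ℂ) ≠ 0 := by exact_mod_cast hμ.ne'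
  rw [← skewOuter, hexponent, exp_smul_of_mul_mul_self_eq_neg_sq_smul hμ0 hcube,
    ← Complex.ofReal_mul, hangle, ← Complex.ofReal_sin, ← Complex.ofReal_cos,
    sin_pi_sub_two_mul_arccos (by linarith) hx1.le, cos_pi_sub_two_mul_arccos (by linarith) hx1.le,
    neg_reflection_mul_reflection_eq hσσ hww hwσ hσw, ← hμ_def, ← Submodule.starProjection.eq_1,
    starProjection_orthogonal_span_pair hσσ hww hwσ hσw (by nlinarith), ← hμ_sq]
  push_cast
  match_scalars
  · ring
  · field_simp
  · field_simp
    linear_combination 2 * hμ_sq
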